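/- arXiv:2604.10881 — 5 statements merged into one kernel-verified Lean document; each statement's English description precedes it below -/
import Mathlib

section
/- Let f(x) = sin²(x). Let x ∈ [π/4, π/2] and x' ∈ [0, π/4] be real numbers with x − x' ≤ π/4. Then f(x) − f(x') ≥ f(x + π/4 − x') − f(π/4). -/
open Real

/-- For `f x = sin² x`, if `x ∈ [π/4, π/2]`, `x' ∈ [0, π/4]` and
`x − x' ≤ π/4`, then `f x − f x' ≥ f (x + π/4 − x') − f (π/4)`. -/
theorem sin_sq_outside_interval
    (x x' : ℝ) (hx : x ∈ Set.Icc (π / 4) (π / 2)) (hx' : x' ∈ Set.Icc 0 (π / 4))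
    (hgap : x - x' ≤ π / 4) :
    sin x ^ 2 - sin x' ^ 2 ≥ sin (x + π / 4 - x') ^ 2 - sin (π / 4) ^ 2 := by
  obtain ⟨hx1, hx2⟩ := hx
  obtain ⟨hx'1, hx'2⟩ := hx'
  have hpi := Real.pi_pos
  have key : sin x ^ 2 - sin x' ^ 2 - (sin (x + π / 4 - x') ^ 2 - sin (π / 4) ^ 2)
      = 2 * sin (x - x') * cos (π / 4 + x') * sin (x - π / 4) := by
    have e1 : x + π / 4 - x' = (x - x') + π / 4 := by ring
    rw [e1, sin_add, sin_sub x x', cos_sub x x', sin_sub x (π/4), cos_add,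
      Real.sin_pi_div_four, Real.cos_pi_div_four]
    have p1 := sin_sq_add_cos_sq x
    have p2 := sin_sq_add_cos_sq x'
    have hs : Real.sqrt 2 ^ 2 = 2 := Real.sq_sqrt (by norm_num)
    set s := sin x
    set c := cos x
    set s' := sin x'
    set c' := cos x'
    linear_combination
      (-(((s*c'-c*s') + (c*c'+s*s'))^2)/4 + 1/4
        - ((s*c'-c*s')*(c'-s')*(s-c))/2) * hs
      + (-(s'^2+c'^2-1)/2 - 1/2 + s'^2) * p1
      + (-1/2 - s^2) * p2
  have h1 : sin (x - x') ≥ 0 := by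
    apply Real.sin_nonneg_of_nonneg_of_le_pi <;> nlinarith
  have h2 : cos (π / 4 + x') ≥ 0 := by
    apply Real.cos_nonneg_of_mem_Icc
    constructor <;> [nlinarith; nlinarith]
  have h3 : sin (x - π / 4) ≥ 0 := by
    apply Real.sin_nonneg_of_nonneg_of_le_pi <;> nlinarith
  nlinarith [mul_nonneg (mul_nonneg h1 h2) h3]
end

section
/- Let n ≥ 2 be a positive integer and let θ, θ' ∈ [0, π/2] be real numbers. Let β be a real number with 0 < β ≤ π/2 and sin²(β) = 1/n. If |sin²(θ) − sin²(θ')| = 1/n, then |θ − θ'| ≤ β. -/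
open Real

lemma sin_sq_add_le (a b : ℝ) (ha : 0 ≤ a) (hb : 0 ≤ b) (hab : a + b ≤ π / 2) :
    sin a ^ 2 + sin b ^ 2 ≤ sin (a + b) ^ 2 := by
  have hsa : 0 ≤ sin a := sin_nonneg_of_nonneg_of_le_pi ha (by nlinarith [pi_pos])
  have hsb : 0 ≤ sin b := sin_nonneg_of_nonneg_of_le_pi hb (by nlinarith [pi_pos])
  have hcab : 0 ≤ cos (a + b) := cos_nonneg_of_mem_Icc ⟨by linarith, hab⟩
  have h1 := sin_add a b
  have h2 := cos_add a b
  have key : sin (a + b) ^ 2 = sin a ^ 2 + sin b ^ 2 + 2 * sin a * sin b * cos (a + b) := by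
    rw [h1, h2]
    linear_combination (sin a ^ 2) * sin_sq_add_cos_sq b + (sin b ^ 2) * sin_sq_add_cos_sq a
  nlinarith [mul_nonneg (mul_nonneg hsa hsb) hcab]

/-- Let `n ≥ 2`, `θ, θ' ∈ [0, π/2]`, and `β ∈ (0, π/2]` with
`sin² β = 1/n`. If `|sin² θ − sin² θ'| = 1/n`, then `|θ − θ'| ≤ β`. -/
theorem angle_sensitivity
    (n : ℕ) (hn : 2 ≤ n)
    (θ θ' : ℝ) (hθ : θ ∈ Set.Icc 0 (π / 2)) (hθ' : θ' ∈ Set.Icc 0 (π / 2))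
    (β : ℝ) (hβ0 : 0 < β) (hβ : β ≤ π / 2) (hβn : sin β ^ 2 = 1 / (n : ℝ))
    (h : |sin θ ^ 2 - sin θ' ^ 2| = 1 / (n : ℝ)) :
    |θ - θ'| ≤ β := by
  wlog hle : θ' ≤ θ with H
  · rw [abs_sub_comm]
    exact H n hn θ' θ hθ' hθ β hβ0 hβ hβn (by rwa [abs_sub_comm]) (le_of_not_ge hle)
  obtain ⟨hθ0, hθ2⟩ := hθ
  obtain ⟨hθ'0, hθ'2⟩ := hθ'
  rw [abs_of_nonneg (by linarith)]
  -- sin θ' ≤ sin θ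
  have hmono : sin θ' ≤ sin θ := by
    apply sin_le_sin_of_le_of_le_pi_div_two (by linarith) hθ2 hle
  have hsθ' : 0 ≤ sin θ' := sin_nonneg_of_nonneg_of_le_pi hθ'0 (by nlinarith [pi_pos])
  have hsθ : 0 ≤ sin θ := sin_nonneg_of_nonneg_of_le_pi hθ0 (by nlinarith [pi_pos])
  have heq : sin θ ^ 2 = sin θ' ^ 2 + sin β ^ 2 := by
    rw [abs_of_nonneg (by nlinarith)] at h
    linarith [hβn ▸ h]
  by_cases hc : π / 2 ≤ θ' + β
  · linarith
  push_neg at hc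
  have key : sin θ ^ 2 ≤ sin (θ' + β) ^ 2 := by
    have := sin_sq_add_le θ' β hθ'0 hβ0.le hc.le
    linarith
  have hsb : 0 ≤ sin (θ' + β) :=
    sin_nonneg_of_nonneg_of_le_pi (by linarith) (by nlinarith [pi_pos])
  have hsin : sin θ ≤ sin (θ' + β) := by nlinarith
  by_contra hcon
  push_neg at hcon
  have : sin (θ' + β) < sin θ :=
    sin_lt_sin_of_lt_of_le_pi_div_two (by linarith) hθ2 (by linarith)
  linarith
end

section
/- Let n ≥ 2 be a positive integer, let X be a type, let q : X → ℝ take only the values 0 and 1, and let D, D' : Fin n → X be datasets that agree at every index except exactly one. Let α = (1/n)·∑_{i} q(D(i)) and α' = (1/n)·∑_{i} q(D'(i)), and let θ, θ' ∈ [0, π/2] be the unique angles with sin²(θ) = α and sin²(θ') = α'. Then |θ − θ'| ≤ arcsin(1/√n). -/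
open Real

lemma aux_angle (c : ℝ) (hc : 0 ≤ c) (θ θ' : ℝ)
    (hθ : θ ∈ Set.Icc 0 (π / 2)) (hθ' : θ' ∈ Set.Icc 0 (π / 2))
    (hle : θ' ≤ θ) (h : sin θ ^ 2 - sin θ' ^ 2 ≤ c ^ 2) :
    θ - θ' ≤ arcsin c := by
  obtain ⟨h0, h1⟩ := hθ
  obtain ⟨h0', h1'⟩ := hθ'
  set d := θ - θ' with hd
  have hdmem : d ∈ Set.Icc (-(π/2)) (π/2) := by
    constructor <;> [linarith [pi_pos.le]; linarith]
  have hdnn : 0 ≤ d := by linarith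
  have hsd : 0 ≤ sin d := sin_nonneg_of_nonneg_of_le_pi hdnn (by linarith [pi_pos])
  have hid : sin (θ - θ') * sin (θ + θ') = sin θ ^ 2 - sin θ' ^ 2 := by
    rw [Real.sin_sub, Real.sin_add]
    have h1 := Real.sin_sq_add_cos_sq θ
    have h2 := Real.sin_sq_add_cos_sq θ'
    nlinarith [h1, h2]
  have hmono := Real.strictMonoOn_sin.monotoneOn
  have hge : sin d ≤ sin (θ + θ') := by
    rcases le_total (θ + θ') (π/2) with hs | hs
    · exact hmono hdmem ⟨by linarith [pi_pos.le], hs⟩ (by linarith)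
    · have : sin (θ + θ') = sin (π - (θ + θ')) := (Real.sin_pi_sub _).symm
      rw [this]
      exact hmono hdmem ⟨by linarith [pi_pos.le], by linarith⟩ (by linarith)
  have hsq : sin d ^ 2 ≤ c ^ 2 := by nlinarith [hid, hge, hsd, h]
  have hsc : sin d ≤ c := by nlinarith [hsd, hc]
  calc d = arcsin (sin d) := (Real.arcsin_sin hdmem.1 hdmem.2).symm
    _ ≤ arcsin c := Real.monotone_arcsin hsc

/-- global sensitivity of the angle `θ` with `sin² θ = q(D)` for a
counting query `q` on neighboring datasets of size `n ≥ 2` is at most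
`arcsin (1/√n)`. -/
theorem counting_query_angle_sensitivity
    (n : ℕ) (hn : 2 ≤ n) (X : Type*) (q : X → ℝ)
    (hq : ∀ x, q x = 0 ∨ q x = 1)
    (D D' : Fin n → X) (hneighbor : ∃! i, D i ≠ D' i)
    (α α' : ℝ)
    (hα : α = (1 / (n : ℝ)) * ∑ i, q (D i))
    (hα' : α' = (1 / (n : ℝ)) * ∑ i, q (D' i))
    (θ θ' : ℝ) (hθ : θ ∈ Set.Icc 0 (π / 2)) (hθ' : θ' ∈ Set.Icc 0 (π / 2))
    (hθα : sin θ ^ 2 = α) (hθα' : sin θ' ^ 2 = α') :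
    |θ - θ'| ≤ arcsin (1 / Real.sqrt n) := by
  obtain ⟨i₀, hi₀, huniq⟩ := hneighbor
  have hnpos : (0:ℝ) < n := by positivity
  have hsum : ∑ i, q (D i) - ∑ i, q (D' i) = q (D i₀) - q (D' i₀) := by
    rw [← Finset.sum_sub_distrib]
    refine Finset.sum_eq_single i₀ (fun i _ hne => ?_) (fun h => absurd (Finset.mem_univ i₀) h)
    have : D i = D' i := by
      by_contra hc
      exact hne (huniq i hc)
    rw [this, sub_self]
  have hdiff : |α - α'| ≤ 1 / n := by
    rw [hα, hα', ← mul_sub, hsum, abs_mul]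
    have h1 : |q (D i₀) - q (D' i₀)| ≤ 1 := by
      rcases hq (D i₀) with h | h <;> rcases hq (D' i₀) with h' | h' <;>
        rw [h, h'] <;> norm_num
    have : |1 / (n:ℝ)| = 1 / n := abs_of_pos (by positivity)
    rw [this]
    calc 1 / (n:ℝ) * |q (D i₀) - q (D' i₀)| ≤ 1 / n * 1 :=
          mul_le_mul_of_nonneg_left h1 (by positivity)
      _ = 1 / n := mul_one _
  have hc : (0:ℝ) ≤ 1 / Real.sqrt n := by positivity
  have hcsq : (1 / Real.sqrt n) ^ 2 = 1 / n := by
    rw [div_pow, one_pow, Real.sq_sqrt hnpos.le]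
  rw [abs_le] at hdiff
  rw [abs_sub_le_iff]
  constructor
  · rcases le_total θ' θ with hle | hle
    · exact aux_angle _ hc θ θ' hθ hθ' hle (by rw [hcsq, hθα, hθα']; linarith [hdiff.2])
    · exact le_trans (by linarith) (Real.arcsin_nonneg.2 hc)
  · rcases le_total θ θ' with hle | hle
    · exact aux_angle _ hc θ' θ hθ' hθ hle (by rw [hcsq, hθα, hθα']; linarith [hdiff.1])
    · exact le_trans (by linarith) (Real.arcsin_nonneg.2 hc)
end

section
/- Let n ≥ 1 and t ≥ 1 be integers, let X be a type, let q : X → ℝ take only the values 0 and 1, and let D, D' : Fin n → X be datasets that agree at every index except exactly one. Let M(D) be the probability distribution on ℝ of the random variable (1/t)·∑_{j=1}^{t} q(D(v(j))), where v(1), …, v(t) are independent indices each uniformly distributed on Fin n (equivalently, M(D)(S) = (1/nᵗ)·|{v : Fin t → Fin n : (1/t)·∑_j q(D(v(j))) ∈ S}| for any S ⊆ ℝ). Then for every set S ⊆ ℝ, M(D)(S) ≤ M(D')(S) + δ₀, where δ₀ = 1 − ((n−1)/n)ᵗ. In other words, the subsampled counting-query mechanism without any added noise is (0, δ₀)-differentially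 private. -/
/-- the subsampled counting-query mechanism without added noise is
`(0, δ₀)`-differentially private, where `δ₀ = 1 − ((n−1)/n)ᵗ`. Here
`M(D)(S) = (1/nᵗ) · |{v : Fin t → Fin n | (1/t)·∑ⱼ q(D(v j)) ∈ S}|` is expressed
via indicator functions. -/
theorem subsampled_counting_query_zero_delta_dp
    (n t : ℕ) (hn : 1 ≤ n) (ht : 1 ≤ t)
    (X : Type*) (q : X → ℝ) (hq : ∀ x, q x = 0 ∨ q x = 1)
    (D D' : Fin n → X) (hneighbor : ∃! i, D i ≠ D' i)
    (S : Set ℝ) :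
    (1 / (n : ℝ) ^ t) * ∑ v : Fin t → Fin n,
        S.indicator (fun _ => (1 : ℝ)) ((1 / (t : ℝ)) * ∑ j, q (D (v j)))
      ≤ (1 / (n : ℝ) ^ t) * ∑ v : Fin t → Fin n,
          S.indicator (fun _ => (1 : ℝ)) ((1 / (t : ℝ)) * ∑ j, q (D' (v j)))
        + (1 - (((n : ℝ) - 1) / n) ^ t) := by
  obtain ⟨i₀, hi₀, huniq⟩ := hneighbor
  have heq : ∀ i, i ≠ i₀ → D i = D' i := by
    intro i hi
    by_contra h
    exact hi (huniq i h)
  set f : (Fin t → Fin n) → ℝ :=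
    fun v => S.indicator (fun _ => (1 : ℝ)) ((1 / (t : ℝ)) * ∑ j, q (D (v j))) with hf
  set g : (Fin t → Fin n) → ℝ :=
    fun v => S.indicator (fun _ => (1 : ℝ)) ((1 / (t : ℝ)) * ∑ j, q (D' (v j))) with hg
  set A : Finset (Fin t → Fin n) := Fintype.piFinset (fun _ => Finset.univ.erase i₀) with hA
  have hmemA : ∀ v, v ∈ A ↔ ∀ j, v j ≠ i₀ := by
    intro v; simp [hA, Fintype.mem_piFinset]
  have hcardA : A.card = (n - 1) ^ t := by
    simp [hA, Fintype.card_piFinset, Finset.card_erase_of_mem]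
  have hfg : ∀ v ∈ A, f v = g v := by
    intro v hv
    have : ∀ j, q (D (v j)) = q (D' (v j)) := fun j => by
      rw [heq _ ((hmemA v).1 hv j)]
    simp [hf, hg, this]
  have hf_le : ∀ v, f v ≤ 1 := fun v =>
    Set.indicator_apply_le' (fun _ => le_rfl) (fun _ => zero_le_one)
  have hg_nonneg : ∀ v, 0 ≤ g v := fun v =>
    Set.indicator_nonneg (fun _ _ => zero_le_one) _
  have hcardC : (Aᶜ.card : ℝ) = (n : ℝ) ^ t - ((n : ℝ) - 1) ^ t := by
    have hle : (n - 1) ^ t ≤ n ^ t := Nat.pow_le_pow_left (Nat.sub_le n 1) t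
    have : Aᶜ.card = n ^ t - (n - 1) ^ t := by
      rw [Finset.card_compl, hcardA]
      simp [Fintype.card_fun]
    rw [this, Nat.cast_sub hle, Nat.cast_pow, Nat.cast_pow, Nat.cast_sub hn]
    norm_num
  have key : ∑ v : Fin t → Fin n, f v
      ≤ (∑ v : Fin t → Fin n, g v) + ((n : ℝ) ^ t - ((n : ℝ) - 1) ^ t) := by
    have h1 : ∑ v : Fin t → Fin n, f v = ∑ v ∈ A, f v + ∑ v ∈ Aᶜ, f v :=
      (Finset.sum_add_sum_compl A f).symm
    have h2 : ∑ v ∈ Aᶜ, f v ≤ (Aᶜ.card : ℝ) := by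
      calc ∑ v ∈ Aᶜ, f v ≤ ∑ _v ∈ Aᶜ, (1 : ℝ) :=
            Finset.sum_le_sum (fun v _ => hf_le v)
        _ = (Aᶜ.card : ℝ) := by simp
    have h3 : ∑ v ∈ A, g v ≤ ∑ v : Fin t → Fin n, g v :=
      Finset.sum_le_sum_of_subset_of_nonneg (Finset.subset_univ A)
        (fun v _ _ => hg_nonneg v)
    have h4 : ∑ v ∈ A, f v = ∑ v ∈ A, g v := Finset.sum_congr rfl hfg
    rw [h1, h4, ← hcardC]
    linarith
  have hN : (0 : ℝ) < (n : ℝ) ^ t := by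
    have : (0 : ℝ) < (n : ℝ) := by exact_mod_cast Nat.lt_of_lt_of_le Nat.zero_lt_one hn
    positivity
  rw [div_pow]
  have h5 : (1 / (n : ℝ) ^ t) * (∑ v : Fin t → Fin n, f v)
      ≤ (1 / (n : ℝ) ^ t) * ((∑ v : Fin t → Fin n, g v)
        + ((n : ℝ) ^ t - ((n : ℝ) - 1) ^ t)) := by
    apply mul_le_mul_of_nonneg_left key
    positivity
  have h6 : (1 / (n : ℝ) ^ t) * ((∑ v : Fin t → Fin n, g v)
      + ((n : ℝ) ^ t - ((n : ℝ) - 1) ^ t))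
      = (1 / (n : ℝ) ^ t) * (∑ v : Fin t → Fin n, g v)
        + (1 - ((n : ℝ) - 1) ^ t / (n : ℝ) ^ t) := by
    field_simp
  linarith
end

section
/- Let b > 0 and let a, a' ∈ ℝ. Then for every measurable set S ⊆ ℝ, ∫_S (1/(2b))·exp(−|x − a|/b) dx ≤ exp(|a − a'|/b) · ∫_S (1/(2b))·exp(−|x − a'|/b) dx. In other words, the Laplace mechanism that outputs a + η, with η a zero-mean Laplace random variable of scale b, is (Δ/b)-differentially private for any pair of outputs whose true values differ by at most Δ = |a − a'|. -/
/-!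
The density of the Laplace law centred at `a` is at most `exp (|a - a'| / b)` times the one
centred at `a'`, pointwise, by the triangle inequality `|x - a'| ≤ |x - a| + |a - a'|`;
integrating this bound over `S` gives the claim.
-/

open MeasureTheory Real Set

noncomputable def laplacePDFReal (a b x : ℝ) : ℝ :=
  1 / (2 * b) * exp (-|x - a| / b)

lemma integrable_exp_neg_abs : Integrable fun x : ℝ ↦ exp (-|x|) := by
  rw [← integrableOn_univ, ← Iic_union_Ioi (a := (0 : ℝ)), integrableOn_union]
  exact ⟨(integrableOn_exp_Iic 0).congr_fun (fun x hx ↦ by rw [abs_of_nonpos hx, neg_neg])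
      measurableSet_Iic,
    (integrableOn_exp_neg_Ioi 0).congr_fun (fun x hx ↦ by rw [abs_of_pos hx]) measurableSet_Ioi⟩

lemma integrable_laplacePDFReal (a : ℝ) {b : ℝ} (hb : 0 < b) :
    Integrable (laplacePDFReal a b) := by
  have h := (integrable_exp_neg_abs.comp_div hb.ne').comp_sub_right a
  refine (h.congr (Filter.Eventually.of_forall fun x ↦ ?_)).const_mul (1 / (2 * b))
  simp only [abs_div, abs_of_pos hb, neg_div]

lemma laplacePDFReal_le_exp_mul (a a' : ℝ) {b : ℝ} (hb : 0 ≤ b) (x : ℝ) :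
    laplacePDFReal a b x ≤ exp (|a - a'| / b) * laplacePDFReal a' b x := by
  unfold laplacePDFReal
  rw [mul_left_comm, ← exp_add, ← add_div]
  gcongr
  linarith [abs_sub_le x a a']

theorem laplace_mechanism_dp_general
    (b : ℝ) (hb : 0 < b) (a a' : ℝ) (S : Set ℝ) :
    (∫ x in S, (1 / (2 * b)) * Real.exp (-|x - a| / b))
      ≤ Real.exp (|a - a'| / b) * ∫ x in S, (1 / (2 * b)) * Real.exp (-|x - a'| / b) := by
  change ∫ x in S, laplacePDFReal a b x ≤ exp (|a - a'| / b) * ∫ x in S, laplacePDFReal a' b x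
  rw [← integral_const_mul]
  exact setIntegral_mono (integrable_laplacePDFReal a hb).integrableOn
    ((integrable_laplacePDFReal a' hb).const_mul _).integrableOn
    (laplacePDFReal_le_exp_mul a a' hb.le)

/-- the Laplace mechanism is differentially private: for any
`b > 0`, `a, a' : ℝ` and measurable `S ⊆ ℝ`,
`∫_S (1/(2b)) e^{−|x−a|/b} dx ≤ e^{|a−a'|/b} ∫_S (1/(2b)) e^{−|x−a'|/b} dx`. -/
theorem laplace_mechanism_dp
    (b : ℝ) (hb : 0 < b) (a a' : ℝ) (S : Set ℝ) (hS : MeasurableSet S) :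
    (∫ x in S, (1 / (2 * b)) * Real.exp (-|x - a| / b))
      ≤ Real.exp (|a - a'| / b) * ∫ x in S, (1 / (2 * b)) * Real.exp (-|x - a'| / b) :=
  laplace_mechanism_dp_general b hb a a' S
end
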